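/- Let M be a slant submanifold with slant angle θ of an almost contact metric manifold, ξ tangent to M. Then for all X, Y tangent to M, g(FX, FY) = sin²θ·[g(X, Y) - η(X)η(Y)], where F is the normal component of φ. -/

import Mathlib

open Real

section Preamble

variable (C V : Type*) [CommRing C] [Algebra ℝ C] [AddCommGroup V] [Module C V]

/-- An almost contact metric structure `(g, φ, ξ, η)` on the module `V` of vector fields
of the ambient manifold, with scalar functions valued in the `ℝ`-algebra `C`. -/
structure ACMS where
  g : V → V → C
  phi : V → V
  xi : V
  eta : V → C
  g_symm : ∀ X Y, g X Y = g Y X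
  g_addl : ∀ X Y Z, g (X + Y) Z = g X Z + g Y Z
  g_smull : ∀ (a : C) (X Y : V), g (a • X) Y = a * g X Y
  g_nondeg : ∀ X, (∀ Y, g X Y = 0) → X = 0
  phi_add : ∀ X Y, phi (X + Y) = phi X + phi Y
  phi_smul : ∀ (a : C) (X : V), phi (a • X) = a • phi X
  phi_sq : ∀ X, phi (phi X) = -X + eta X • xi
  eta_xi : eta xi = 1
  phi_xi : phi xi = 0
  eta_phi : ∀ X, eta (phi X) = 0
  g_phiphi : ∀ X Y, g (phi X) (phi Y) = g X Y - eta X * eta Y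
  eta_def : ∀ X, eta X = g X xi

/-- A Kenmotsu manifold: an almost contact metric structure together with its Levi-Civita
connection `nab` (with directional derivative `D` on functions) satisfying
`(∇̄_X φ)Y = g(φX, Y)ξ - η(Y)φX` and `∇̄_X ξ = X - η(X)ξ`. -/
structure Kenmotsu extends ACMS C V where
  nab : V → V → V
  D : V → C → C
  compat : ∀ X Y Z, D X (g Y Z) = g (nab X Y) Z + g Y (nab X Z)
  kphi : ∀ X Y, nab X (phi Y) = phi (nab X Y) + g (phi X) Y • xi - eta Y • phi X
  kxi : ∀ X, nab X xi = X - eta X • xi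

variable {C V}

/-- A submanifold tangent to `ξ`: a submodule `TM` of tangent vector fields together with
the tangential/normal projections `tang`, `nor`. -/
structure Subm (S : ACMS C V) where
  TM : Submodule C V
  tang : V → V
  nor : V → V
  tang_mem : ∀ v, tang v ∈ TM
  decomp : ∀ v, tang v + nor v = v
  nor_orth : ∀ v, ∀ w ∈ TM, S.g (nor v) w = 0
  tang_of_mem : ∀ v ∈ TM, tang v = v
  xi_mem : S.xi ∈ TM

namespace Subm
variable {S : ACMS C V}

/-- The tangential part `T` of `φ`. -/
def T (M : Subm S) : V → V := fun X => M.tang (S.phi X)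

/-- The normal part `F` of `φ`. -/
def F (M : Subm S) : V → V := fun X => M.nor (S.phi X)

/-- `M` is slant with Wirtinger angle `θ`: for every tangent `X` not proportional to `ξ`,
the angle between `φX` and `TM` is `θ`, i.e. `‖TX‖² = cos²θ ‖φX‖²`. -/
def IsSlantAngle (M : Subm S) (θ : ℝ) : Prop :=
  θ ∈ Set.Icc 0 (π / 2) ∧ ∀ X ∈ M.TM, X ∉ Submodule.span C {S.xi} →
    S.g (M.T X) (M.T X) = algebraMap ℝ C ((Real.cos θ) ^ 2) * S.g (S.phi X) (S.phi X)

/-- Slant via the characterization `T² = cos²θ(-I + η ⊗ ξ)` on `TM`. -/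
def SlantT2 (M : Subm S) (θ : ℝ) : Prop :=
  ∀ X ∈ M.TM, M.T (M.T X) = algebraMap ℝ C ((Real.cos θ) ^ 2) • (-X + S.eta X • S.xi)

end Subm

/-- A submanifold of a Kenmotsu manifold with its induced connection `nabM`, second
fundamental form `h2`, shape operator `A` and normal connection `nabp`, satisfying the
Gauss and Weingarten formulas. -/
structure SubmK (K : Kenmotsu C V) extends Subm K.toACMS where
  nabM : V → V → V
  h2 : V → V → V
  A : V → V → V
  nabp : V → V → V
  gauss : ∀ X ∈ TM, ∀ Y ∈ TM, K.nab X Y = nabM X Y + h2 X Y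
  nabM_mem : ∀ X ∈ TM, ∀ Y ∈ TM, nabM X Y ∈ TM
  h2_nor : ∀ X ∈ TM, ∀ Y ∈ TM, ∀ w ∈ TM, K.g (h2 X Y) w = 0
  h2_symm : ∀ X Y, h2 X Y = h2 Y X
  wein : ∀ X ∈ TM, ∀ N : V, (∀ w ∈ TM, K.g N w = 0) → K.nab X N = -A N X + nabp X N
  A_mem : ∀ (N : V), ∀ X ∈ TM, A N X ∈ TM
  nabp_nor : ∀ X ∈ TM, ∀ N : V, (∀ w ∈ TM, K.g N w = 0) → ∀ w ∈ TM, K.g (nabp X N) w = 0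
  shape_rel : ∀ X ∈ TM, ∀ Y ∈ TM, ∀ N : V, K.g (h2 X Y) N = K.g (A N X) Y

namespace SubmK
variable {K : Kenmotsu C V}

/-- The tangential part `T` of `φ` (also the operator `t` on normal fields). -/
def T (M : SubmK K) : V → V := fun X => M.tang (K.phi X)

/-- The normal part `F` of `φ` (also the operator `f` on normal fields). -/
def F (M : SubmK K) : V → V := fun X => M.nor (K.phi X)

/-- Slant via the characterization `T² = cos²θ(-I + η ⊗ ξ)` on `TM`. -/
def SlantT2 (M : SubmK K) (θ : ℝ) : Prop :=
  ∀ X ∈ M.TM, M.T (M.T X) = algebraMap ℝ C ((Real.cos θ) ^ 2) • (-X + K.eta X • K.xi)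

/-- `M` is totally umbilical with (normal) mean curvature vector `H`:
`h(X, Y) = g(X, Y) H`. -/
def TotUmb (M : SubmK K) (H : V) : Prop :=
  (∀ w ∈ M.TM, K.g H w = 0) ∧ ∀ X ∈ M.TM, ∀ Y ∈ M.TM, M.h2 X Y = K.g X Y • H

/-- `H` lies in the `φ`-invariant normal subbundle `μ`, the orthogonal complement of
`F(TM)` in the normal bundle (so `H` and `φH` are normal and orthogonal to `F(TM)`). -/
def InMu (M : SubmK K) (H : V) : Prop :=
  (∀ w ∈ M.TM, K.g H w = 0) ∧ (∀ X ∈ M.TM, K.g H (M.F X) = 0) ∧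
  (∀ w ∈ M.TM, K.g (K.phi H) w = 0) ∧ (∀ X ∈ M.TM, K.g (K.phi H) (M.F X) = 0)

end SubmK

end Preamble

namespace ACMS

variable {C V : Type*} [CommRing C] [AddCommGroup V] [Module C V] (S : ACMS C V)

theorem g_neg_left (X Y : V) : S.g (-X) Y = -S.g X Y := by
  simpa using S.g_smull (-1) X Y

theorem g_add_right (X Y Z : V) : S.g X (Y + Z) = S.g X Y + S.g X Z := by
  rw [S.g_symm, S.g_addl, S.g_symm Y, S.g_symm Z]

theorem g_neg_right (X Y : V) : S.g X (-Y) = -S.g X Y := by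
  rw [S.g_symm, S.g_neg_left, S.g_symm]

theorem g_smul_right (a : C) (X Y : V) : S.g X (a • Y) = a * S.g X Y := by
  rw [S.g_symm, S.g_smull, S.g_symm]

theorem g_phi_xi (X : V) : S.g (S.phi X) S.xi = 0 := by
  rw [← S.eta_def, S.eta_phi]

/-- `φ` is skew-adjoint: put `φY` in `g(φX, φY) = g(X, Y) - η(X)η(Y)` and use `φ² = -I + η ⊗ ξ`. -/
theorem g_phi_right (X Y : V) : S.g X (S.phi Y) = -S.g (S.phi X) Y := by
  have h := S.g_phiphi X (S.phi Y)
  rw [S.eta_phi, mul_zero, sub_zero, S.phi_sq, g_add_right, g_neg_right, g_smul_right,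
    g_phi_xi, mul_zero, add_zero] at h
  exact h.symm

end ACMS

namespace Subm

variable {C V : Type*} [CommRing C] [AddCommGroup V] [Module C V]
  {S : ACMS C V} (M : Subm S)

theorem phi_eq_T_add_F (X : V) : S.phi X = M.T X + M.F X :=
  (M.decomp (S.phi X)).symm

theorem T_mem (X : V) : M.T X ∈ M.TM :=
  M.tang_mem _

theorem g_F_of_mem (X : V) {w : V} (hw : w ∈ M.TM) : S.g (M.F X) w = 0 :=
  M.nor_orth _ w hw

theorem g_of_mem_F {w : V} (hw : w ∈ M.TM) (X : V) : S.g w (M.F X) = 0 := by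
  rw [S.g_symm, M.g_F_of_mem X hw]

theorem g_phi_phi_eq_g_T_T_add_g_F_F (X Y : V) :
    S.g (S.phi X) (S.phi Y) = S.g (M.T X) (M.T Y) + S.g (M.F X) (M.F Y) := by
  rw [M.phi_eq_T_add_F X, M.phi_eq_T_add_F Y, S.g_addl, S.g_add_right, S.g_add_right,
    M.g_F_of_mem X (M.T_mem Y), M.g_of_mem_F (M.T_mem X) Y]
  ring

/-- `g(TX, TY) = g(TX, φY) = -g(φTX, Y) = -g(T²X, Y)`, and `T²` is known on a slant submanifold. -/
theorem g_T_T_of_slantT2 [Algebra ℝ C] {θ : ℝ} (hslant : M.SlantT2 θ) {X Y : V} (hX : X ∈ M.TM)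
    (hY : Y ∈ M.TM) :
    S.g (M.T X) (M.T Y) = algebraMap ℝ C (cos θ ^ 2) * (S.g X Y - S.eta X * S.eta Y) := by
  have hTphi : S.g (M.T X) (M.T Y) = S.g (M.T X) (S.phi Y) := by
    rw [M.phi_eq_T_add_F Y, S.g_add_right, M.g_of_mem_F (M.T_mem X), add_zero]
  rw [hTphi, S.g_phi_right, M.phi_eq_T_add_F (M.T X), S.g_addl, M.g_F_of_mem _ hY, add_zero,
    hslant X hX, S.g_smull, S.g_addl, S.g_neg_left, S.g_smull, S.g_symm S.xi Y, ← S.eta_def]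
  ring

end Subm

/-- on a slant submanifold with angle `θ`,
`g(FX, FY) = sin²θ [g(X, Y) - η(X)η(Y)]`. -/
theorem stmt10 {C V : Type*} [CommRing C] [Algebra ℝ C] [AddCommGroup V] [Module C V] (S : ACMS C V) (M : Subm S) (θ : ℝ)
    (hslant : M.SlantT2 θ) :
    ∀ X ∈ M.TM, ∀ Y ∈ M.TM,
      S.g (M.F X) (M.F Y) =
        algebraMap ℝ C ((Real.sin θ) ^ 2) * (S.g X Y - S.eta X * S.eta Y) := by
  intro X hX Y hY
  have hsplit := M.g_phi_phi_eq_g_T_T_add_g_F_F X Y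
  rw [S.g_phiphi, M.g_T_T_of_slantT2 hslant hX hY] at hsplit
  have hsin : algebraMap ℝ C (sin θ ^ 2) = 1 - algebraMap ℝ C (cos θ ^ 2) := by
    rw [sin_sq, map_sub, map_one]
  rw [hsin]
  linear_combination -hsplit
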